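/- arXiv:1001.2408 — 8 statements merged into one kernel-verified Lean document; each statement's English description precedes it below -/
import Mathlib

section
/- For every matrix M in SU(2) there exists a unique real number φ in the closed interval [0,π] such that M is conjugate within SU(2) to the diagonal matrix diag(e^{iφ}, e^{−iφ}); moreover this unique φ satisfies Tr(M) = 2·cos(φ), i.e. φ = arccos(Re(Tr M)/2). -/
/-!
Write `M = !![a, b; -b̄, ā]`, so that `tr M = 2 Re a = 2 cos φ` with `φ = arccos (Re a)`, and
`λ = e^{iφ}` is a root of the characteristic polynomial `λ² - (tr M) λ + 1` since `λ + λ̄ = tr M`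
and `λ λ̄ = 1`. A normalized eigenvector `(p, q)` for `λ` is the first column of
`g = !![p, -q̄; q, p̄] ∈ SU(2)`, and the quaternionic shape of `M` makes the second column an
eigenvector for `λ̄`, so `g⁻¹ M g = diag(λ, λ̄)`. Conversely, conjugation preserves the trace, and
`2 cos φ` determines `φ ∈ [0, π]`.
-/

open Matrix

noncomputable section

/-- SU(2) as the special unitary group of 2×2 complex matrices. -/
abbrev SU2 : Submonoid (Matrix (Fin 2) (Fin 2) ℂ) := Matrix.specialUnitaryGroup (Fin 2) ℂ

instance : Group SU2 :=
  { (inferInstance : Monoid SU2) with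
    inv := fun A => ⟨star A.val, Matrix.mem_specialUnitaryGroup_iff.mpr
      ⟨Unitary.star_mem (Matrix.mem_specialUnitaryGroup_iff.mp A.2).1, by
        have h2 : A.val.det = 1 := (Matrix.mem_specialUnitaryGroup_iff.mp A.2).2
        simp [Matrix.star_eq_conjTranspose, Matrix.det_conjTranspose, h2]⟩⟩
    inv_mul_cancel := fun A => Subtype.ext (Matrix.mem_specialUnitaryGroup_iff.mp A.2).1.1 }

/-- The angle of an element of SU(2): `arccos(Re(Tr M)/2) ∈ [0, π]`. -/
def ang (A : SU2) : ℝ := Real.arccos ((A.val.trace).re / 2)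

namespace Matrix

variable {R : Type*} [CommRing R]

lemma det_sub_smul_one_fin_two (M : Matrix (Fin 2) (Fin 2) R) (l : R) :
    (M - l • 1).det = l ^ 2 - M.trace * l + M.det := by
  simp only [det_fin_two, trace_fin_two, sub_apply, smul_apply, smul_eq_mul, one_apply_eq,
    one_apply_ne zero_ne_one, one_apply_ne one_ne_zero]
  ring

variable [StarRing R]

lemma star_fin_two_of (a b c d : R) :
    star !![a, b; c, d] = !![star a, star c; star b, star d] := by
  ext i j; fin_cases i <;> fin_cases j <;> rfl

lemma of_mem_specialUnitaryGroup_fin_two_iff {a b c d : R} :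
    !![a, b; c, d] ∈ specialUnitaryGroup (Fin 2) R ↔
      d = star a ∧ c = -star b ∧ a * star a + b * star b = 1 := by
  rw [mem_specialUnitaryGroup_iff, mem_unitaryGroup_iff, det_fin_two_of]
  constructor
  · rintro ⟨hunit, hdet⟩
    have hstar : star !![a, b; c, d] = adjugate !![a, b; c, d] := by
      calc star !![a, b; c, d]
          _ = adjugate !![a, b; c, d] * !![a, b; c, d] * star !![a, b; c, d] := by
            rw [adjugate_mul, det_fin_two_of, hdet, one_smul, one_mul]
          _ = adjugate !![a, b; c, d] := by rw [mul_assoc, hunit, mul_one]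
    rw [adjugate_fin_two_of, star_fin_two_of] at hstar
    obtain ⟨⟨had, -⟩, hbc, -⟩ : (star a = d ∧ star c = -b) ∧ star b = -c ∧ star d = a := by
      simpa [← ext_iff, Fin.forall_fin_two] using hstar
    have hcb : c = -star b := by rw [hbc, neg_neg]
    subst had hcb
    exact ⟨rfl, rfl, by linear_combination hdet⟩
  · rintro ⟨rfl, rfl, h⟩
    refine ⟨?_, by linear_combination h⟩
    rw [star_fin_two_of, mul_fin_two, one_fin_two, ← ext_iff]
    simp only [Fin.forall_fin_two, of_apply, cons_val', cons_val_fin_one, cons_val_zero,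
      cons_val_one, star_neg, star_star]
    exact ⟨⟨h, by ring⟩, by ring, by linear_combination h⟩

lemma mem_specialUnitaryGroup_fin_two_iff {M : Matrix (Fin 2) (Fin 2) R} :
    M ∈ specialUnitaryGroup (Fin 2) R ↔
      M 1 1 = star (M 0 0) ∧ M 1 0 = -star (M 0 1) ∧
        M 0 0 * star (M 0 0) + M 0 1 * star (M 0 1) = 1 := by
  conv_lhs => rw [eta_fin_two M]
  exact of_mem_specialUnitaryGroup_fin_two_iff

lemma eq_of_mem_specialUnitaryGroup_fin_two {M : Matrix (Fin 2) (Fin 2) R}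
    (hM : M ∈ specialUnitaryGroup (Fin 2) R) :
    M = !![M 0 0, M 0 1; -star (M 0 1), star (M 0 0)] := by
  obtain ⟨h11, h10, -⟩ := mem_specialUnitaryGroup_fin_two_iff.mp hM
  rw [← h11, ← h10]
  exact eta_fin_two M

-- Conjugating the eigenvalue equation shows that `(-star q, star p)` is an eigenvector
-- for `star l`.
lemma mul_eq_mul_of_mulVec_eq_smul {a b p q l : R}
    (h : !![a, b; -star b, star a] *ᵥ ![p, q] = l • ![p, q]) :
    !![a, b; -star b, star a] * !![p, -star q; q, star p] =
      !![p, -star q; q, star p] * !![l, 0; 0, star l] := by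
  have h0 : p * a + q * b = l * p := by simpa using congrFun h 0
  have h1 : -(p * star b) + q * star a = l * q := by simpa using congrFun h 1
  have h0' := congrArg star h0
  have h1' := congrArg star h1
  simp only [star_add, star_mul', star_neg, star_star] at h0' h1'
  rw [mul_fin_two, mul_fin_two, ← ext_iff]
  simp only [Fin.forall_fin_two, of_apply, cons_val', cons_val_fin_one, cons_val_zero,
    cons_val_one]
  exact ⟨⟨by linear_combination h0, by linear_combination -h1'⟩,
    by linear_combination h1, by linear_combination h0'⟩

lemma exists_normalized_mulVec_eq_smul_of_det_eq_zero {M : Matrix (Fin 2) (Fin 2) ℂ} {l : ℂ}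
    (h : (M - l • 1).det = 0) :
    ∃ p q : ℂ, p * star p + q * star q = 1 ∧ M *ᵥ ![p, q] = l • ![p, q] := by
  obtain ⟨v, hv0, hv⟩ := exists_mulVec_eq_zero_iff.mpr h
  rw [sub_mulVec, smul_mulVec, one_mulVec, sub_eq_zero] at hv
  have hn : 0 < Complex.normSq (v 0) + Complex.normSq (v 1) := by
    by_contra! hle
    have h0 := Complex.normSq_nonneg (v 0)
    have h1 := Complex.normSq_nonneg (v 1)
    refine hv0 (funext fun i => Complex.normSq_eq_zero.mp ?_)
    fin_cases i <;> dsimp <;> linarith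
  set c : ℂ := Complex.ofReal (√(Complex.normSq (v 0) + Complex.normSq (v 1)))⁻¹ with hc
  refine ⟨c * v 0, c * v 1, ?_, ?_⟩
  · simp only [Complex.star_def, Complex.mul_conj, Complex.normSq_mul]
    rw [← Complex.ofReal_add, ← mul_add, hc, Complex.normSq_ofReal, ← mul_inv,
      Real.mul_self_sqrt hn.le, inv_mul_cancel₀ hn.ne', Complex.ofReal_one]
  · have : ![c * v 0, c * v 1] = c • v := by
      ext i; fin_cases i <;> rfl
    rw [this, mulVec_smul, hv, smul_comm]

end Matrix

open Complex in
lemma Complex.star_exp_ofReal_mul_I (φ : ℝ) : star (exp (φ * I)) = exp (-(φ * I)) := by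
  rw [star_def, ← exp_conj, map_mul, conj_ofReal, conj_I, mul_neg]

open Complex in
lemma Complex.exp_ofReal_mul_I_add_exp_neg (φ : ℝ) :
    exp (φ * I) + exp (-(φ * I)) = ((2 * Real.cos φ : ℝ) : ℂ) := by
  rw [← neg_mul, ← two_cos]
  push_cast
  rfl

namespace SU2

open Complex

lemma trace_eq_two_mul_cos_ang (M : SU2) : M.val.trace = ((2 * Real.cos (ang M) : ℝ) : ℂ) := by
  obtain ⟨h11, -, hnorm⟩ := mem_specialUnitaryGroup_fin_two_iff.mp M.2
  set a := M.val 0 0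
  have htr : M.val.trace = ((2 * a.re : ℝ) : ℂ) := by
    rw [trace_fin_two, h11, star_def, add_conj]
  have hre : |a.re| ≤ 1 := by
    have hnorm' : normSq a + normSq (M.val 0 1) = 1 := by
      simpa only [star_def, mul_conj, ← ofReal_add, ofReal_eq_one] using hnorm
    rw [← abs_one, ← sq_le_sq, one_pow, sq]
    linarith [re_sq_le_normSq a, normSq_nonneg (M.val 0 1)]
  rw [ang, htr, ofReal_re, mul_div_cancel_left₀ _ two_ne_zero,
    Real.cos_arccos (abs_le.mp hre).1 (abs_le.mp hre).2]

lemma det_sub_exp_smul_one (M : SU2) : (M.val - exp (ang M * I) • 1).det = 0 := by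
  have hsum := exp_ofReal_mul_I_add_exp_neg (ang M)
  have hprod : exp (ang M * I) * exp (-(ang M * I)) = 1 := by
    rw [← exp_add, add_neg_cancel, exp_zero]
  rw [det_sub_smul_one_fin_two, trace_eq_two_mul_cos_ang, ← hsum,
    (mem_specialUnitaryGroup_iff.mp M.2).2]
  linear_combination -hprod

lemma val_conj_eq_of_mul_eq {g M : SU2} {D : Matrix (Fin 2) (Fin 2) ℂ}
    (h : M.val * g.val = g.val * D) :
    ((g⁻¹ * M * g⁻¹⁻¹ : SU2) : Matrix (Fin 2) (Fin 2) ℂ) = D := by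
  rw [inv_inv, Submonoid.coe_mul, Submonoid.coe_mul, mul_assoc, h, ← mul_assoc,
    ← Submonoid.coe_mul, inv_mul_cancel, Submonoid.coe_one, one_mul]

lemma trace_val_conj (g M : SU2) : (g * M * g⁻¹ : SU2).val.trace = M.val.trace := by
  rw [Submonoid.coe_mul, Submonoid.coe_mul, trace_mul_cycle, ← Submonoid.coe_mul, inv_mul_cancel,
    Submonoid.coe_one, one_mul]

theorem exists_conj_eq_diag (M : SU2) :
    ∃ g : SU2, ((g * M * g⁻¹ : SU2) : Matrix (Fin 2) (Fin 2) ℂ) =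
      !![exp (ang M * I), 0; 0, exp (-(ang M * I))] := by
  obtain ⟨p, q, hpq, hv⟩ :=
    exists_normalized_mulVec_eq_smul_of_det_eq_zero (det_sub_exp_smul_one M)
  have hg : !![p, -star q; q, star p] ∈ SU2 :=
    of_mem_specialUnitaryGroup_fin_two_iff.mpr
      ⟨rfl, by rw [star_neg, star_star, neg_neg],
        by rw [star_neg, star_star]; linear_combination hpq⟩
  refine ⟨(⟨_, hg⟩ : SU2)⁻¹, val_conj_eq_of_mul_eq ?_⟩
  rw [← star_exp_ofReal_mul_I]
  rw [eq_of_mem_specialUnitaryGroup_fin_two M.2] at hv ⊢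
  exact mul_eq_mul_of_mulVec_eq_smul hv

lemma trace_eq_of_conj_eq_diag {M : SU2} {φ : ℝ}
    (h : ∃ g : SU2, ((g * M * g⁻¹ : SU2) : Matrix (Fin 2) (Fin 2) ℂ) =
      !![exp (φ * I), 0; 0, exp (-(φ * I))]) :
    M.val.trace = ((2 * Real.cos φ : ℝ) : ℂ) := by
  obtain ⟨g, hg⟩ := h
  rw [← trace_val_conj g, hg, trace_fin_two_of, exp_ofReal_mul_I_add_exp_neg]

lemma eq_arccos_of_conj_eq_diag {M : SU2} {φ : ℝ} (hφ : φ ∈ Set.Icc 0 Real.pi)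
    (h : ∃ g : SU2, ((g * M * g⁻¹ : SU2) : Matrix (Fin 2) (Fin 2) ℂ) =
      !![exp (φ * I), 0; 0, exp (-(φ * I))]) :
    φ = Real.arccos ((M.val.trace).re / 2) := by
  rw [trace_eq_of_conj_eq_diag h, ofReal_re, mul_div_cancel_left₀ _ two_ne_zero,
    Real.arccos_cos hφ.1 hφ.2]

end SU2

/-- Every element of SU(2) is conjugate to a unique diagonal matrix
`diag(e^{iφ}, e^{−iφ})` with `φ ∈ [0, π]`; moreover this unique `φ` satisfies
`Tr M = 2 cos φ`, i.e. `φ = arccos(Re(Tr M)/2)`. -/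
theorem stmt0 (M : SU2) :
    (∃! φ : ℝ, φ ∈ Set.Icc 0 Real.pi ∧
      ∃ g : SU2, ((g * M * g⁻¹ : SU2) : Matrix (Fin 2) (Fin 2) ℂ) =
        !![Complex.exp (φ * Complex.I), 0; 0, Complex.exp (-(φ * Complex.I))]) ∧
    (∀ φ : ℝ, φ ∈ Set.Icc 0 Real.pi →
      (∃ g : SU2, ((g * M * g⁻¹ : SU2) : Matrix (Fin 2) (Fin 2) ℂ) =
        !![Complex.exp (φ * Complex.I), 0; 0, Complex.exp (-(φ * Complex.I))]) →
      M.val.trace = ((2 * Real.cos φ : ℝ) : ℂ) ∧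
      φ = Real.arccos ((M.val.trace).re / 2)) :=
  ⟨⟨ang M, ⟨⟨Real.arccos_nonneg _, Real.arccos_le_pi _⟩, SU2.exists_conj_eq_diag M⟩,
      fun _ hφ => SU2.eq_arccos_of_conj_eq_diag hφ.1 hφ.2⟩,
    fun _ hφ hg => ⟨SU2.trace_eq_of_conj_eq_diag hg, SU2.eq_arccos_of_conj_eq_diag hφ hg⟩⟩

end
end

section
/- For all A, B in SU(2), the angle of the product satisfies the inequalities |ang(A) − ang(B)| ≤ ang(AB) and ang(AB) ≤ min(ang(A) + ang(B), 2π − ang(A) − ang(B)). -/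
/-!
An element `!![a, b; -b̄, ā]` of SU(2) is the unit quaternion `q = a + b j`, and `Re Tr / 2` is its
real part `cos α`, with imaginary part of norm `sin α`. The real part of `q p` is
`cos α cos β - ⟪Im q, Im p⟫`, and Cauchy–Schwarz puts it between `cos (α + β)` and `cos (α - β)`.
Since `arccos` is antitone and inverts `cos` on `[0, π]`, this gives `|α - β| ≤ ang (A B) ≤ α + β`;
the bound by `2π - α - β` is the same argument applied to `π - α` and `π - β`.
-/

open Matrix

noncomputable section

open Real Set ComplexConjugate

lemma abs_sub_le_arccos_of_le_cos_sub {α β t : ℝ} (hα : α ∈ Icc 0 π) (hβ : β ∈ Icc 0 π)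
    (h : t ≤ cos (α - β)) : |α - β| ≤ arccos t :=
  calc |α - β| = arccos (cos (α - β)) := by
        rw [← cos_abs, arccos_cos (abs_nonneg _)
          (abs_le.mpr ⟨by linarith [hα.1, hβ.2], by linarith [hα.2, hβ.1]⟩)]
    _ ≤ arccos t := arccos_le_arccos h

lemma arccos_le_add_of_cos_add_le {α β t : ℝ} (hα : 0 ≤ α) (hβ : 0 ≤ β)
    (h : cos (α + β) ≤ t) : arccos t ≤ α + β := by
  rcases le_or_gt (α + β) π with hle | hgt
  · calc arccos t ≤ arccos (cos (α + β)) := arccos_le_arccos h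
      _ = α + β := arccos_cos (by positivity) hle
  · exact (arccos_le_pi t).trans hgt.le

lemma arccos_le_two_pi_sub_of_cos_add_le {α β t : ℝ} (hα : α ≤ π) (hβ : β ≤ π)
    (h : cos (α + β) ≤ t) : arccos t ≤ 2 * π - α - β := by
  have h' : cos ((π - α) + (π - β)) ≤ t := by
    rwa [show (π - α) + (π - β) = 2 * π - (α + β) by ring, cos_two_pi_sub]
  linarith [arccos_le_add_of_cos_add_le (sub_nonneg.mpr hα) (sub_nonneg.mpr hβ) h']

lemma cos_arccos_of_sq_add_sq_eq_one {x r : ℝ} (h : x ^ 2 + r ^ 2 = 1) : cos (arccos x) = x := by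
  have : |x| ≤ 1 := abs_le_one_iff_mul_self_le_one.mpr (by nlinarith [sq_nonneg r])
  exact cos_arccos (abs_le.mp this).1 (abs_le.mp this).2

lemma sin_arccos_of_sq_add_sq_eq_one {x r : ℝ} (hr : 0 ≤ r) (h : x ^ 2 + r ^ 2 = 1) :
    sin (arccos x) = r := by
  rw [sin_arccos, show 1 - x ^ 2 = r ^ 2 by linarith, sqrt_sq hr]

section InnerProductSpace

variable {E : Type*} [NormedAddCommGroup E] [InnerProductSpace ℝ E] {x y : ℝ} {u v : E}

lemma cos_arccos_add_arccos_le (hx : x ^ 2 + ‖u‖ ^ 2 = 1) (hy : y ^ 2 + ‖v‖ ^ 2 = 1) :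
    cos (arccos x + arccos y) ≤ x * y - inner ℝ u v := by
  rw [cos_add, cos_arccos_of_sq_add_sq_eq_one hx, cos_arccos_of_sq_add_sq_eq_one hy,
    sin_arccos_of_sq_add_sq_eq_one (norm_nonneg u) hx,
    sin_arccos_of_sq_add_sq_eq_one (norm_nonneg v) hy]
  linarith [(abs_le.mp (abs_real_inner_le_norm u v)).2]

lemma le_cos_arccos_sub_arccos (hx : x ^ 2 + ‖u‖ ^ 2 = 1) (hy : y ^ 2 + ‖v‖ ^ 2 = 1) :
    x * y - inner ℝ u v ≤ cos (arccos x - arccos y) := by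
  rw [cos_sub, cos_arccos_of_sq_add_sq_eq_one hx, cos_arccos_of_sq_add_sq_eq_one hy,
    sin_arccos_of_sq_add_sq_eq_one (norm_nonneg u) hx,
    sin_arccos_of_sq_add_sq_eq_one (norm_nonneg v) hy]
  linarith [(abs_le.mp (abs_real_inner_le_norm u v)).1]

end InnerProductSpace

namespace SU2

variable (A B : SU2)

lemma star_eq_adjugate : star A.val = A.val.adjugate := by
  obtain ⟨hA, hdet⟩ := mem_specialUnitaryGroup_iff.mp A.2
  rw [← one_smul ℂ A.val.adjugate, ← Ring.inverse_one ℂ, ← hdet, ← inv_def,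
    inv_eq_left_inv hA.1]

lemma apply_one_one : A.val 1 1 = conj (A.val 0 0) := by
  simpa [adjugate_fin_two] using (congrFun₂ (star_eq_adjugate A) 0 0).symm

lemma apply_one_zero : A.val 1 0 = -conj (A.val 0 1) := by
  simpa [adjugate_fin_two] using congrArg star (congrFun₂ (star_eq_adjugate A) 0 1)

/-- Reading `A = !![a, b; -b̄, ā]` as the unit quaternion `a + b j`, its imaginary part. -/
def imVec : EuclideanSpace ℝ (Fin 3) := !₂[(A.val 0 0).im, (A.val 0 1).re, (A.val 0 1).im]

lemma normSq_add_normSq : Complex.normSq (A.val 0 0) + Complex.normSq (A.val 0 1) = 1 := by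
  have hdet := (mem_specialUnitaryGroup_iff.mp A.2).2
  rw [det_fin_two, apply_one_one, apply_one_zero, mul_neg, sub_neg_eq_add, Complex.mul_conj,
    Complex.mul_conj] at hdet
  exact_mod_cast hdet

lemma re_sq_add_norm_imVec_sq : (A.val 0 0).re ^ 2 + ‖imVec A‖ ^ 2 = 1 := by
  have h := normSq_add_normSq A
  simp only [Complex.normSq_apply] at h
  simp only [imVec, EuclideanSpace.norm_sq_eq, norm_eq_abs, sq_abs, Fin.sum_univ_three,
    cons_val_zero, cons_val_one, cons_val]
  linarith

lemma ang_eq_arccos : ang A = arccos (A.val 0 0).re := by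
  simp [ang, trace_fin_two, apply_one_one]

lemma ang_mul_eq_arccos :
    ang (A * B) = arccos ((A.val 0 0).re * (B.val 0 0).re - inner ℝ (imVec A) (imVec B)) := by
  have hmul : (A * B).val = A.val * B.val := rfl
  rw [ang, hmul]
  congr 1
  simp only [trace_fin_two, mul_apply, Fin.sum_univ_two, apply_one_zero, apply_one_one,
    Complex.add_re, Complex.mul_re, Complex.neg_re, Complex.neg_im, Complex.conj_re,
    Complex.conj_im, imVec, PiLp.inner_apply, RCLike.inner_apply, ringHom_apply,
    Fin.sum_univ_three, cons_val_zero, cons_val_one, cons_val]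
  ring

end SU2

/-- Triangle inequalities for the angles of a product in SU(2). -/
theorem stmt2 (A B : SU2) :
    |ang A - ang B| ≤ ang (A * B) ∧
    ang (A * B) ≤ min (ang A + ang B) (2 * Real.pi - ang A - ang B) := by
  have hA := SU2.re_sq_add_norm_imVec_sq A
  have hB := SU2.re_sq_add_norm_imVec_sq B
  have h_add := cos_arccos_add_arccos_le hA hB
  rw [SU2.ang_mul_eq_arccos, SU2.ang_eq_arccos, SU2.ang_eq_arccos]
  exact ⟨abs_sub_le_arccos_of_le_cos_sub ⟨arccos_nonneg _, arccos_le_pi _⟩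
      ⟨arccos_nonneg _, arccos_le_pi _⟩ (le_cos_arccos_sub_arccos hA hB),
    le_min (arccos_le_add_of_cos_add_le (arccos_nonneg _) (arccos_nonneg _) h_add)
      (arccos_le_two_pi_sub_of_cos_add_le (arccos_le_pi _) (arccos_le_pi _) h_add)⟩

end
end

section
/- If two pairs (A, B) and (A', B') of elements of SU(2) satisfy ang(A) = ang(A'), ang(B) = ang(B') and ang(AB) = ang(A'B'), then the pairs are simultaneously conjugate: there exists g ∈ SU(2) with A' = g·A·g⁻¹ and B' = g·B·g⁻¹. -/
/-!
Write an element of SU(2) as `!![a, b; -conj b, conj a]` with `|a|² + |b|² = 1`; its angle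
determines `Re a`. Diagonalizing shows that elements with equal angles are conjugate, so we may
assume `A = A' = diag(t, conj t)`. If `t = ±1`, then `A` is central and we only need to conjugate
`B` to `B'`. Otherwise `Re tr(AB) = 2 Re(t a)` together with `Re a` determines `a`, and hence
`|b|`; the torus `diag(e, conj e)` centralizes `A` and multiplies `b` by `e²`, so it moves `B`
to `B'`.
-/

open Matrix

noncomputable section

open Complex ComplexConjugate

lemma Complex.exists_normSq_eq_one_sq_mul_eq {q q' : ℂ} (h : normSq q = normSq q') :
    ∃ e : ℂ, normSq e = 1 ∧ e ^ 2 * q = q' := by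
  by_cases hq : q = 0
  · refine ⟨1, by simp, ?_⟩
    rw [hq, map_zero, eq_comm, normSq_eq_zero] at h
    simp [hq, h]
  obtain ⟨e, he⟩ := IsAlgClosed.exists_pow_nat_eq (q' / q) two_pos
  refine ⟨e, ?_, by rw [he, div_mul_cancel₀ _ hq]⟩
  have : normSq e ^ 2 = 1 := by
    rw [← map_pow, he, normSq_div, ← h, div_self (normSq_eq_zero.not.mpr hq)]
  nlinarith [normSq_nonneg e]

namespace SU2

lemma val_mul_star (g : SU2) : g.val * star g.val = 1 :=
  (mem_specialUnitaryGroup_iff.mp g.2).1.2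

lemma star_mul_val (g : SU2) : star g.val * g.val = 1 :=
  (mem_specialUnitaryGroup_iff.mp g.2).1.1

lemma det_val (g : SU2) : g.val.det = 1 :=
  (mem_specialUnitaryGroup_iff.mp g.2).2

lemma conj_eq_iff {g M N : SU2} : g * M * g⁻¹ = N ↔ g.val * M.val = N.val * g.val := by
  rw [mul_inv_eq_iff_eq_mul, Subtype.ext_iff]
  rfl

def cayleyKlein (a b : ℂ) : Matrix (Fin 2) (Fin 2) ℂ := !![a, b; -conj b, conj a]

@[simp]
lemma cayleyKlein_zero_zero (a b : ℂ) : cayleyKlein a b 0 0 = a := rfl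

lemma cayleyKlein_mul (a b c d : ℂ) :
    cayleyKlein a b * cayleyKlein c d
      = cayleyKlein (a * c - b * conj d) (a * d + b * conj c) := by
  ext i j
  fin_cases i <;> fin_cases j <;> simp [cayleyKlein, Matrix.mul_apply] <;> ring

lemma cayleyKlein_mul_star (a b : ℂ) :
    cayleyKlein a b * star (cayleyKlein a b) = ((normSq a + normSq b : ℝ) : ℂ) • 1 := by
  ext i j
  fin_cases i <;> fin_cases j <;>
    simp [cayleyKlein, Matrix.mul_apply, star_eq_conjTranspose, mul_conj] <;> ring

lemma cayleyKlein_mem {a b : ℂ} (h : normSq a + normSq b = 1) : cayleyKlein a b ∈ SU2 := by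
  have hstar : star (cayleyKlein a b) * cayleyKlein a b = 1 := by
    rw [mul_eq_one_comm, cayleyKlein_mul_star, h]; simp
  have hc : a * conj a + b * conj b = 1 := by
    rw [mul_conj, mul_conj]; exact_mod_cast h
  refine mem_specialUnitaryGroup_iff.mpr ⟨mem_unitaryGroup_iff'.mpr hstar, ?_⟩
  rw [cayleyKlein, det_fin_two_of]
  linear_combination hc

lemma val_eq_cayleyKlein (M : SU2) : M.val = cayleyKlein (M.val 0 0) (M.val 0 1) := by
  have hadj : star M.val = adjugate M.val := by
    rw [← Matrix.inv_eq_left_inv (star_mul_val M), Matrix.inv_def, det_val]; simp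
  have h11 := congrFun (congrFun hadj 0) 0
  have h10 := congrArg conj (congrFun (congrFun hadj 0) 1)
  simp [adjugate_fin_two] at h11 h10
  ext i j
  fin_cases i <;> fin_cases j <;> simp [cayleyKlein, ← h11, h10]

lemma normSq_add_normSq_s4 (M : SU2) : normSq (M.val 0 0) + normSq (M.val 0 1) = 1 := by
  have h := det_val M
  rw [val_eq_cayleyKlein, cayleyKlein, det_fin_two_of] at h
  exact_mod_cast (show ((normSq (M.val 0 0) + normSq (M.val 0 1) : ℝ) : ℂ) = 1 by
    push_cast; rw [← mul_conj, ← mul_conj]; linear_combination h)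

lemma re_val_zero_zero_mem_Icc (M : SU2) : (M.val 0 0).re ∈ Set.Icc (-1) 1 := by
  have := normSq_add_normSq_s4 M
  rw [Set.mem_Icc, ← abs_le, ← sq_le_one_iff_abs_le_one]
  nlinarith [normSq_apply (M.val 0 0), sq_nonneg (M.val 0 0).im, normSq_nonneg (M.val 0 1)]

lemma ang_eq_arccos_s4 (M : SU2) : ang M = Real.arccos (M.val 0 0).re := by
  rw [ang, val_eq_cayleyKlein M, cayleyKlein, trace_fin_two_of, add_conj]
  simp

lemma re_eq_of_ang_eq {M N : SU2} (h : ang M = ang N) : (M.val 0 0).re = (N.val 0 0).re := by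
  rw [ang_eq_arccos_s4, ang_eq_arccos_s4] at h
  exact Real.arccos_injOn (re_val_zero_zero_mem_Icc M) (re_val_zero_zero_mem_Icc N) h

lemma ang_conj (g M : SU2) : ang (g * M * g⁻¹) = ang M := by
  rw [ang, ang]
  congr 3
  change (g.val * M.val * star g.val).trace = M.val.trace
  rw [trace_mul_cycle, star_mul_val, one_mul]

lemma exists_conj_val_eq_of_intertwines {M : SU2} {N : Matrix (Fin 2) (Fin 2) ℂ} {x y : ℂ}
    (hxy : normSq x + normSq y ≠ 0) (h : cayleyKlein x y * M.val = N * cayleyKlein x y) :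
    ∃ g : SU2, (g * M * g⁻¹).val = N := by
  set r := √(normSq x + normSq y)
  have hpos : 0 < normSq x + normSq y :=
    (add_nonneg (normSq_nonneg x) (normSq_nonneg y)).lt_of_ne' hxy
  have hr : (r : ℂ) ≠ 0 := ofReal_ne_zero.mpr (Real.sqrt_pos.mpr hpos).ne'
  have hmem : cayleyKlein (x / r) (y / r) ∈ SU2 := by
    refine cayleyKlein_mem ?_
    rw [normSq_div, normSq_div, normSq_ofReal, ← add_div, Real.mul_self_sqrt hpos.le,
      div_self hxy]
  have hval : cayleyKlein (x / r) (y / r) = (r : ℂ)⁻¹ • cayleyKlein x y := by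
    ext i j
    fin_cases i <;> fin_cases j <;> simp [cayleyKlein, div_eq_inv_mul]
  refine ⟨⟨_, hmem⟩, ?_⟩
  change cayleyKlein (x / r) (y / r) * M.val * star (cayleyKlein (x / r) (y / r)) = N
  rw [hval, smul_mul_assoc, h, ← mul_smul_comm, mul_assoc, ← hval,
    val_mul_star ⟨_, hmem⟩, mul_one]

lemma exists_conj_val_eq_diagonal (M : SU2) :
    ∃ g : SU2, (g * M * g⁻¹).val = cayleyKlein ⟨(M.val 0 0).re, √(1 - (M.val 0 0).re ^ 2)⟩ 0 := by
  set a := M.val 0 0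
  set b := M.val 0 1
  set t : ℂ := ⟨a.re, √(1 - a.re ^ 2)⟩
  have hsq : √(1 - a.re ^ 2) ^ 2 = 1 - a.re ^ 2 := by
    obtain ⟨h₁, h₂⟩ := re_val_zero_zero_mem_Icc M
    exact Real.sq_sqrt (by nlinarith)
  -- `t` and `conj t` are the eigenvalues of `M`: both roots of `X ^ 2 - (a + conj a) X + 1`
  have hsum : t + conj t = a + conj a := by
    rw [add_conj, add_conj]
  have hprod : t * conj t = a * conj a + b * conj b := by
    have hab : normSq a + normSq b = 1 := normSq_add_normSq_s4 M
    rw [mul_conj, mul_conj, mul_conj]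
    exact_mod_cast (show normSq t = normSq a + normSq b by
      rw [hab, normSq_mk, ← sq, ← sq, hsq]; ring)
  have hM : M.val = cayleyKlein a b := val_eq_cayleyKlein M
  -- `cayleyKlein (t - conj a) b` intertwines `M` with the diagonal form; it vanishes only when
  -- `M` is diagonal with the eigenvalues in the other order, and then the Weyl element swaps them.
  by_cases hdeg : normSq (t - conj a) + normSq b = 0
  · have hx : t - conj a = 0 := normSq_eq_zero.mp
      (by linarith [normSq_nonneg (t - conj a), normSq_nonneg b])
    have hb : b = 0 := normSq_eq_zero.mp
      (by linarith [normSq_nonneg (t - conj a), normSq_nonneg b])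
    refine exists_conj_val_eq_of_intertwines (x := 0) (y := 1) (by simp) ?_
    rw [hM, cayleyKlein_mul, cayleyKlein_mul]
    congr 1
    · simp [hb]
    · simp
      linear_combination -hx
  · refine exists_conj_val_eq_of_intertwines hdeg ?_
    rw [hM, cayleyKlein_mul, cayleyKlein_mul]
    congr 1
    · linear_combination (-t) * hsum + hprod
    · simp
      ring

theorem exists_conj_eq_of_ang_eq {M N : SU2} (h : ang M = ang N) : ∃ g : SU2, g * M * g⁻¹ = N := by
  obtain ⟨g, hg⟩ := exists_conj_val_eq_diagonal M
  obtain ⟨k, hk⟩ := exists_conj_val_eq_diagonal N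
  rw [← re_eq_of_ang_eq h, ← hg] at hk
  refine ⟨k⁻¹ * g, ?_⟩
  rw [show k⁻¹ * g * M * (k⁻¹ * g)⁻¹ = k⁻¹ * (g * M * g⁻¹) * k by group, ← Subtype.ext hk]
  group

lemma cayleyKlein_diagonal_mul {e : ℂ} (he : normSq e = 1) (p q : ℂ) :
    cayleyKlein e 0 * cayleyKlein p q = cayleyKlein p (e ^ 2 * q) * cayleyKlein e 0 := by
  have hc : e * conj e = 1 := by rw [mul_conj, he, ofReal_one]
  rw [cayleyKlein_mul, cayleyKlein_mul]
  congr 1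
  · simp; ring
  · simp; linear_combination (-(e * q)) * hc

theorem exists_conj_fix_diagonal {D B B' : SU2} {t : ℂ} (hD : D.val = cayleyKlein t 0)
    (hB : ang B = ang B') (hDB : ang (D * B) = ang (D * B')) :
    ∃ g : SU2, g * D * g⁻¹ = D ∧ g * B * g⁻¹ = B' := by
  by_cases ht : t.im = 0
  · have hcentral : D.val = t • 1 := by
      ext i j
      fin_cases i <;> fin_cases j <;> simp [hD, cayleyKlein, conj_eq_iff_im.mpr ht]
    obtain ⟨g, hg⟩ := exists_conj_eq_of_ang_eq hB
    refine ⟨g, conj_eq_iff.mpr ?_, hg⟩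
    rw [hcentral, mul_smul_comm, smul_mul_assoc, mul_one, one_mul]
  have hre : (B.val 0 0).re = (B'.val 0 0).re := re_eq_of_ang_eq hB
  have hDB' : (t * B.val 0 0).re = (t * B'.val 0 0).re := by
    have h := re_eq_of_ang_eq hDB
    change ((D.val * B.val) 0 0).re = ((D.val * B'.val) 0 0).re at h
    rwa [hD, val_eq_cayleyKlein B, val_eq_cayleyKlein B', cayleyKlein_mul, cayleyKlein_mul,
      cayleyKlein_zero_zero, cayleyKlein_zero_zero, zero_mul, sub_zero, zero_mul, sub_zero] at h
  have hp : B.val 0 0 = B'.val 0 0 := by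
    refine Complex.ext hre (mul_left_cancel₀ ht ?_)
    simp only [mul_re] at hDB'
    rw [hre] at hDB'
    linarith
  obtain ⟨e, he, hq⟩ := exists_normSq_eq_one_sq_mul_eq (q := B.val 0 1) (q' := B'.val 0 1)
    (by linarith [normSq_add_normSq_s4 B, normSq_add_normSq_s4 B', congrArg normSq hp])
  refine ⟨⟨_, cayleyKlein_mem (b := 0) (by simpa using he)⟩, conj_eq_iff.mpr ?_,
    conj_eq_iff.mpr ?_⟩
  · change cayleyKlein e 0 * D.val = D.val * cayleyKlein e 0
    rw [hD, cayleyKlein_diagonal_mul he, mul_zero]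
  · change cayleyKlein e 0 * B.val = B'.val * cayleyKlein e 0
    rw [val_eq_cayleyKlein B, cayleyKlein_diagonal_mul he, hq, hp, ← val_eq_cayleyKlein B']

theorem exists_conj_fix_of_ang_eq {A B B' : SU2} (hB : ang B = ang B')
    (hAB : ang (A * B) = ang (A * B')) : ∃ g : SU2, g * A * g⁻¹ = A ∧ g * B * g⁻¹ = B' := by
  obtain ⟨k, hk⟩ := exists_conj_val_eq_diagonal A
  have hconj : ∀ M N : SU2, k * M * k⁻¹ * (k * N * k⁻¹) = k * (M * N) * k⁻¹ := fun M N => by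
    group
  obtain ⟨g, hgA, hgB⟩ := exists_conj_fix_diagonal (B := k * B * k⁻¹) (B' := k * B' * k⁻¹) hk
    (by rwa [ang_conj, ang_conj]) (by rwa [hconj, hconj, ang_conj, ang_conj])
  refine ⟨k⁻¹ * g * k, ?_, ?_⟩
  · rw [show k⁻¹ * g * k * A * (k⁻¹ * g * k)⁻¹ = k⁻¹ * (g * (k * A * k⁻¹) * g⁻¹) * k by group,
      hgA]
    group
  · rw [show k⁻¹ * g * k * B * (k⁻¹ * g * k)⁻¹ = k⁻¹ * (g * (k * B * k⁻¹) * g⁻¹) * k by group,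
      hgB]
    group

end SU2

open SU2

/-- Two pairs of elements of SU(2) with the same three angles are simultaneously
conjugate. -/
theorem stmt4 (A B A' B' : SU2)
    (h1 : ang A = ang A') (h2 : ang B = ang B') (h3 : ang (A * B) = ang (A' * B')) :
    ∃ g : SU2, A' = g * A * g⁻¹ ∧ B' = g * B * g⁻¹ := by
  obtain ⟨g, rfl⟩ := exists_conj_eq_of_ang_eq h1
  have hAB : g * A * g⁻¹ * (g * B * g⁻¹) = g * (A * B) * g⁻¹ := by group
  obtain ⟨k, hkA, hkB⟩ :=
    exists_conj_fix_of_ang_eq (A := g * A * g⁻¹) (B := g * B * g⁻¹) (B' := B')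
    (by rwa [ang_conj]) (by rwa [hAB, ang_conj])
  refine ⟨k * g, ?_, ?_⟩
  · rw [← hkA]; group
  · rw [← hkB]; group

end
end

section
/- Let A, B ∈ SU(2) be two matrices that do not commute. If ξ is a 2×2 complex matrix with ξᴴ = −ξ and Tr(ξ) = 0 (i.e. ξ ∈ su(2)) satisfying A·ξ·A⁻¹ = ξ and B·ξ·B⁻¹ = ξ, then ξ = 0. -/
open Matrix

noncomputable section

/-!
Identify the traceless part of a 2×2 matrix `M` with the vector
`(M₀₁, M₁₀, M₀₀ - M₁₁) ∈ K³`. The commutator `[M, N]` is then given by the cross product of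
the two vectors, so two matrices commute iff their vectors are parallel. A nonzero traceless `ξ`
has a nonzero vector, hence everything commuting with `ξ` is parallel to it, and any two such
matrices commute. Conjugation-invariance of `ξ` under `A` and `B` says exactly that `A` and `B`
commute with `ξ`.
-/

section CommRing

variable {R : Type*} [CommRing R]

def sl2Coords (M : Matrix (Fin 2) (Fin 2) R) : Fin 3 → R :=
  ![M 0 1, M 1 0, M 0 0 - M 1 1]

lemma commutator_eq_cross_sl2Coords (M N : Matrix (Fin 2) (Fin 2) R) :
    M * N - N * M =
      let w := sl2Coords M ⨯₃ sl2Coords N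
      !![w 2, w 1; w 0, -w 2] := by
  ext i j
  fin_cases i <;> fin_cases j <;>
    simp [sl2Coords, cross_apply, Matrix.mul_apply, Fin.sum_univ_two] <;> ring

lemma commute_iff_cross_sl2Coords_eq_zero {M N : Matrix (Fin 2) (Fin 2) R} :
    Commute M N ↔ sl2Coords M ⨯₃ sl2Coords N = 0 := by
  rw [commute_iff_eq, ← sub_eq_zero, commutator_eq_cross_sl2Coords]
  simp [← Matrix.ext_iff, funext_iff, Fin.forall_fin_succ]
  tauto

end CommRing

section Field

variable {K : Type*} [Field K]

lemma sl2Coords_ne_zero [NeZero (2 : K)] {ξ : Matrix (Fin 2) (Fin 2) K} (hξ : ξ ≠ 0)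
    (htr : ξ.trace = 0) : sl2Coords ξ ≠ 0 := by
  contrapose! hξ
  simp only [sl2Coords, funext_iff, Pi.zero_apply, Fin.forall_fin_succ, cons_val_zero,
    cons_val_succ, cons_val_fin_one, forall_const] at hξ
  obtain ⟨h01, h10, hdiag⟩ := hξ
  rw [trace_fin_two] at htr
  have h00 : ξ 0 0 = 0 := by
    have : (2 : K) * ξ 0 0 = 0 := by linear_combination htr + hdiag
    simpa [NeZero.ne] using this
  have h11 : ξ 1 1 = 0 := by linear_combination h00 - hdiag
  ext i j
  fin_cases i <;> fin_cases j <;> simp [h00, h01, h10, h11]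

lemma Commute.of_commute_of_sl2Coords_ne_zero {ξ M N : Matrix (Fin 2) (Fin 2) K}
    (hξ : sl2Coords ξ ≠ 0) (hM : Commute ξ M) (hN : Commute ξ N) : Commute M N := by
  have parallel {P} (hP : Commute ξ P) : ∃ a : K, a • sl2Coords ξ = sl2Coords P := by
    rw [commute_iff_cross_sl2Coords_eq_zero] at hP
    by_contra! h
    exact crossProduct_ne_zero_iff_linearIndependent.2 ((LinearIndependent.pair_iff' hξ).2 h) hP
  obtain ⟨a, ha⟩ := parallel hM
  obtain ⟨b, hb⟩ := parallel hN
  rw [commute_iff_cross_sl2Coords_eq_zero, ← ha, ← hb]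
  simp [cross_self]

end Field

theorem stmt8_general (A B : SU2) (h : A * B ≠ B * A) (ξ : Matrix (Fin 2) (Fin 2) ℂ)
    (htr : ξ.trace = 0)
    (hA : A.val * ξ * (A⁻¹ : SU2).val = ξ) (hB : B.val * ξ * (B⁻¹ : SU2).val = ξ) :
    ξ = 0 := by
  have commute_of_conj_eq {C : SU2} (hC : C.val * ξ * (C⁻¹ : SU2).val = ξ) :
      Commute ξ C.val := by
    have hinv : (C⁻¹ : SU2).val * C.val = 1 := congrArg Subtype.val (inv_mul_cancel C)
    calc ξ * C.val = C.val * ξ * ((C⁻¹ : SU2).val * C.val) := by rw [← mul_assoc, hC]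
      _ = C.val * ξ := by rw [hinv, mul_one]
  by_contra hξ
  exact h <| Subtype.ext <| (Commute.of_commute_of_sl2Coords_ne_zero (sl2Coords_ne_zero hξ htr)
    (commute_of_conj_eq hA) (commute_of_conj_eq hB)).eq

/-- If A, B ∈ SU(2) do not commute, the only element of su(2) fixed by both adjoint
actions is 0. -/
theorem stmt8 (A B : SU2) (h : A * B ≠ B * A) (ξ : Matrix (Fin 2) (Fin 2) ℂ)
    (hskew : ξᴴ = -ξ) (htr : ξ.trace = 0)
    (hA : A.val * ξ * (A⁻¹ : SU2).val = ξ) (hB : B.val * ξ * (B⁻¹ : SU2).val = ξ) :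
    ξ = 0 :=
  stmt8_general A B h ξ htr hA hB

end
end

section
/- Let Γ be a group and ρ : Γ → SU(2) a group homomorphism whose image is abelian (ρ(γ) and ρ(δ) commute for all γ, δ ∈ Γ). Then there exists g ∈ SU(2) such that g·ρ(γ)·g⁻¹ lies in the diagonal torus T for every γ ∈ Γ. -/
open Matrix

noncomputable section

/-- The diagonal torus of SU(2): matrices `diag(z, z̄)` with `|z| = 1`. -/
def diagTorus : Set (Matrix (Fin 2) (Fin 2) ℂ) :=
  {M | ∃ z : ℂ, ‖z‖ = 1 ∧ M = !![z, 0; 0, starRingEnd ℂ z]}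

/-!
Every element of SU(2) has a unit eigenvector `(a, b)`, and conjugating by the SU(2) matrix with
first column `(a, b)` makes it upper triangular, hence diagonal. If the image of `ρ` is central it
consists of scalar matrices, which lie in the torus already. Otherwise conjugate a non-central
`ρ γ₀` to `diag(z, z̄)` with `z ≠ z̄`: a matrix commuting with it is diagonal, so the same
conjugation puts the whole (commuting) image into the torus.
-/

open ComplexConjugate

local notation "Mat₂" => Matrix (Fin 2) (Fin 2) ℂ

theorem Matrix.star_eq_adjugate_of_mem_specialUnitaryGroup {n α : Type*} [Fintype n]
    [DecidableEq n] [CommRing α] [StarRing α] {M : Matrix n n α}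
    (hM : M ∈ specialUnitaryGroup n α) : star M = adjugate M := by
  obtain ⟨hu, hdet⟩ := mem_specialUnitaryGroup_iff.mp hM
  calc star M = star M * M * adjugate M := by
        rw [mul_assoc, mul_adjugate, hdet, one_smul, mul_one]
    _ = adjugate M := by rw [mem_unitaryGroup_iff'.mp hu, one_mul]

theorem Matrix.apply_eq_zero_of_commute_diagonal {n R : Type*} [Fintype n] [DecidableEq n]
    [CommRing R] [NoZeroDivisors R] {N : Matrix n n R} {d : n → R}
    (h : Commute N (diagonal d)) {i j : n} (hij : d i ≠ d j) : N i j = 0 := by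
  have hij' := congrFun (congrFun h.eq i) j
  rw [mul_diagonal, diagonal_mul] at hij'
  have : N i j * (d j - d i) = 0 := by linear_combination hij'
  exact (mul_eq_zero.mp this).resolve_right (sub_ne_zero.mpr hij.symm)

theorem exists_unit_eigenvector_fin_two (A : Mat₂) :
    ∃ a b μ : ℂ, a * conj a + b * conj b = 1 ∧ A *ᵥ ![a, b] = μ • ![a, b] := by
  obtain ⟨μ, hμ⟩ := Module.End.exists_eigenvalue (toLin' A)
  obtain ⟨v, hv, hv0⟩ := hμ.exists_hasEigenvector
  rw [Module.End.mem_eigenspace_iff, toLin'_apply] at hv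
  have hpos : 0 < Complex.normSq (v 0) + Complex.normSq (v 1) := by
    obtain ⟨i, hi⟩ := Function.ne_iff.mp hv0
    have := Complex.normSq_pos.mpr hi
    fin_cases i
    · exact add_pos_of_pos_of_nonneg this (Complex.normSq_nonneg _)
    · exact add_pos_of_nonneg_of_pos (Complex.normSq_nonneg _) this
  set r : ℝ := √(Complex.normSq (v 0) + Complex.normSq (v 1))
  have hr : (r : ℂ) ≠ 0 := Complex.ofReal_ne_zero.mpr (Real.sqrt_pos.mpr hpos).ne'
  have hr2 : (r : ℂ) ^ 2 = v 0 * conj (v 0) + v 1 * conj (v 1) := by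
    rw [← Complex.ofReal_pow, Real.sq_sqrt hpos.le, Complex.mul_conj, Complex.mul_conj]
    push_cast
    ring
  have hw : ![v 0 / r, v 1 / r] = (r : ℂ)⁻¹ • v := by
    ext i
    fin_cases i <;> simp [div_eq_inv_mul]
  refine ⟨v 0 / r, v 1 / r, μ, ?_, ?_⟩
  · simp only [map_div₀, Complex.conj_ofReal]
    field_simp
    linear_combination -hr2
  · rw [hw, mulVec_smul, hv, smul_comm]

namespace SU2

variable {M : Mat₂}

lemma coe_inv (g : SU2) : ((g⁻¹ : SU2) : Mat₂) = star (g : Mat₂) :=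
  rfl

lemma apply_one_zero_s10 (hM : M ∈ SU2) : M 1 0 = -conj (M 0 1) := by
  have h := congrFun (congrFun (star_eq_adjugate_of_mem_specialUnitaryGroup hM) 0) 1
  simpa [adjugate_fin_two] using congrArg star h

lemma apply_one_one_s10 (hM : M ∈ SU2) : M 1 1 = conj (M 0 0) := by
  have h := congrFun (congrFun (star_eq_adjugate_of_mem_specialUnitaryGroup hM) 1) 1
  simpa [adjugate_fin_two] using congrArg star h

lemma mem_diagTorus_of_apply_one_zero (hM : M ∈ SU2) (h : M 1 0 = 0) : M ∈ diagTorus := by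
  have h01 : M 0 1 = 0 := by simpa [h] using apply_one_zero_s10 hM
  have hdet : M 0 0 * conj (M 0 0) = 1 := by
    rw [← apply_one_one_s10 hM, ← (mem_specialUnitaryGroup_iff.mp hM).2, det_fin_two, h, mul_zero,
      sub_zero]
  refine ⟨M 0 0, ?_, ?_⟩
  · rw [Complex.mul_conj', ← Complex.ofReal_pow, Complex.ofReal_eq_one] at hdet
    exact (pow_eq_one_iff_of_nonneg (norm_nonneg _) two_ne_zero).mp hdet
  · ext i j
    fin_cases i <;> fin_cases j <;> simp [h, h01, apply_one_one_s10 hM]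

lemma mem_of_unit_column {a b : ℂ} (h : a * conj a + b * conj b = 1) :
    !![a, -conj b; b, conj a] ∈ SU2 := by
  refine mem_specialUnitaryGroup_iff.mpr ⟨mem_unitaryGroup_iff.mpr ?_, ?_⟩
  · ext i j
    fin_cases i <;> fin_cases j <;> simp [mul_apply, star_apply, mul_comm] <;> linear_combination h
  · simp [det_fin_two]
    linear_combination h

lemma exists_conj_mem_diagTorus (A : SU2) :
    ∃ g : SU2, ((g * A * g⁻¹ : SU2) : Mat₂) ∈ diagTorus := by
  obtain ⟨a, b, μ, hunit, heig⟩ := exists_unit_eigenvector_fin_two (A : Mat₂)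
  have e0 := congrFun heig 0
  have e1 := congrFun heig 1
  simp only [mulVec, dotProduct, Fin.sum_univ_two, cons_val_zero, cons_val_one, cons_val_fin_one,
    Pi.smul_apply, smul_eq_mul] at e0 e1
  refine ⟨(⟨_, mem_of_unit_column hunit⟩ : SU2)⁻¹,
    mem_diagTorus_of_apply_one_zero (SetLike.coe_mem _) ?_⟩
  simp only [Submonoid.coe_mul, inv_inv, coe_inv, mul_apply, star_apply, of_apply, cons_val',
    cons_val_zero, cons_val_one, cons_val_fin_one, Fin.sum_univ_two, RCLike.star_def, map_neg,
    Complex.conj_conj]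
  linear_combination (-b) * e0 + a * e1

lemma mem_diagTorus_of_commute {D : Mat₂} (hM : M ∈ SU2)
    (hD : D ∈ diagTorus) (hreg : D 0 0 ≠ D 1 1) (h : Commute M D) : M ∈ diagTorus := by
  obtain ⟨z, -, rfl⟩ := hD
  rw [← diagonal_vec2] at h
  exact mem_diagTorus_of_apply_one_zero hM (apply_eq_zero_of_commute_diagonal h hreg.symm)

lemma mem_center_of_apply_eq {A : SU2} (hA : (A : Mat₂) ∈ diagTorus)
    (h : (A : Mat₂) 0 0 = (A : Mat₂) 1 1) : A ∈ Subgroup.center SU2 := by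
  obtain ⟨z, -, hz⟩ := hA
  have hz' : conj z = z := by simpa [hz] using h.symm
  have hscalar : (A : Mat₂) = z • 1 := by
    rw [hz, hz']
    ext i j
    fin_cases i <;> fin_cases j <;> simp
  refine Subgroup.mem_center_iff.mpr fun g => Subtype.ext ?_
  simp [hscalar]

lemma mem_diagTorus_of_mem_center {A : SU2} (hA : A ∈ Subgroup.center SU2) :
    (A : Mat₂) ∈ diagTorus := by
  obtain ⟨g, hg⟩ := exists_conj_mem_diagTorus A
  rwa [Subgroup.mem_center_iff.mp hA g, mul_inv_cancel_right] at hg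

end SU2

open SU2 in
/-- A representation with abelian image can be conjugated into the diagonal torus. -/
theorem stmt10 {Γ : Type*} [Group Γ] (ρ : Γ →* SU2)
    (hab : ∀ γ δ : Γ, ρ γ * ρ δ = ρ δ * ρ γ) :
    ∃ g : SU2, ∀ γ : Γ, ((g * ρ γ * g⁻¹ : SU2) : Matrix (Fin 2) (Fin 2) ℂ) ∈ diagTorus := by
  by_cases hcentral : ∀ γ, ρ γ ∈ Subgroup.center SU2
  · exact ⟨1, fun γ => by simpa using mem_diagTorus_of_mem_center (hcentral γ)⟩
  obtain ⟨γ₀, hγ₀⟩ := not_forall.mp hcentral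
  obtain ⟨g, hg⟩ := exists_conj_mem_diagTorus (ρ γ₀)
  have hreg : ((g * ρ γ₀ * g⁻¹ : SU2) : Mat₂) 0 0 ≠ ((g * ρ γ₀ * g⁻¹ : SU2) : Mat₂) 1 1 :=
    fun h => hγ₀ <| by
    simpa [mul_assoc] using Subgroup.instNormalCenter.conj_mem' _ (mem_center_of_apply_eq hg h) g
  exact ⟨g, fun γ => mem_diagTorus_of_commute (SetLike.coe_mem _) hg hreg
    ((show Commute (ρ γ) (ρ γ₀) from hab γ γ₀).conj g |>.map SU2.subtype)⟩

end
end

section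
/- Let Γ be a group and ρ, ρ' : Γ → SU(2) two homomorphisms whose images lie in the diagonal torus T. Then there exists g ∈ SU(2) with ρ'(γ) = g·ρ(γ)·g⁻¹ for all γ ∈ Γ if and only if either ρ' = ρ, or ρ'(γ) = ρ(γ)⁻¹ for all γ ∈ Γ. -/
open Matrix

noncomputable section

/-!
If `ρ' γ * g = g * ρ γ` with `g` invertible and both `ρ γ`, `ρ' γ` diagonal, then every
nonzero entry `g 0 j` of the first row of `g` forces `ρ' γ 0 0 = ρ γ j j`, for all `γ` at once.
Since `g` has a nonzero entry in its first row, either `ρ' = ρ` (`j = 0`) or `ρ' = ρ⁻¹`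
(`j = 1`). Conversely, the Weyl element `!![0, 1; -1, 0]` conjugates every element of the
torus to its inverse.
-/

namespace Matrix

variable {n R : Type*} [Fintype n] [DecidableEq n]

theorem eq_of_diagonal_mul_eq_mul_diagonal [CommSemiring R] [IsCancelMulZero R]
    {d d' : n → R} {G : Matrix n n R} (h : diagonal d * G = G * diagonal d') {i j : n}
    (hG : G i j ≠ 0) : d i = d' j := by
  have hij := congrFun (congrFun h i) j
  rw [diagonal_mul, mul_diagonal, mul_comm] at hij
  exact mul_left_cancel₀ hG hij

theorem exists_row_ne_zero_of_det_ne_zero [CommRing R] {G : Matrix n n R} (hG : G.det ≠ 0)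
    (i : n) : ∃ j, G i j ≠ 0 := by
  by_contra! h
  exact hG (det_eq_zero_of_row_eq_zero i h)

end Matrix

lemma eq_diagonal_of_mem_diagTorus {M : Matrix (Fin 2) (Fin 2) ℂ} (hM : M ∈ diagTorus) :
    M = diagonal ![M 0 0, starRingEnd ℂ (M 0 0)] := by
  obtain ⟨z, -, rfl⟩ := hM
  simp [diagonal_fin_two]

namespace SU2

lemma inv_val (A : SU2) : (A⁻¹ : SU2).val = star A.val := rfl

lemma det_val_ne_zero (A : SU2) : A.val.det ≠ 0 := by
  simp [(mem_specialUnitaryGroup_iff.mp A.2).2]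

lemma val_mul_eq_mul_val_of_eq_conj {A B g : SU2} (h : B = g * A * g⁻¹) :
    B.val * g.val = g.val * A.val :=
  congrArg Subtype.val (show B * g = g * A by rw [h, inv_mul_cancel_right])

lemma eq_of_val_zero_zero_eq {A B : SU2} (hA : A.val ∈ diagTorus) (hB : B.val ∈ diagTorus)
    (h : B.val 0 0 = A.val 0 0) : B = A := by
  apply Subtype.ext
  rw [eq_diagonal_of_mem_diagTorus hA, eq_diagonal_of_mem_diagTorus hB, h]

lemma eq_inv_of_val_zero_zero_eq_conj {A B : SU2} (hA : A.val ∈ diagTorus)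
    (hB : B.val ∈ diagTorus) (h : B.val 0 0 = starRingEnd ℂ (A.val 0 0)) : B = A⁻¹ := by
  apply Subtype.ext
  rw [inv_val, eq_diagonal_of_mem_diagTorus hA, eq_diagonal_of_mem_diagTorus hB, h,
    star_eq_conjTranspose, diagonal_conjTranspose]
  congr 1
  ext i
  fin_cases i <;> simp

def weyl : SU2 :=
  ⟨!![0, 1; -1, 0], mem_specialUnitaryGroup_iff.mpr
    ⟨mem_unitaryGroup_iff.mpr <| by
      ext i j
      fin_cases i <;> fin_cases j <;> simp [star_eq_conjTranspose, mul_apply, Fin.sum_univ_two],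
      by simp [det_fin_two]⟩⟩

lemma weyl_mul_inv_of_mem_diagTorus {A : SU2} (hA : A.val ∈ diagTorus) :
    weyl * A * weyl⁻¹ = A⁻¹ := by
  rw [mul_inv_eq_iff_eq_mul]
  apply Subtype.ext
  change weyl.val * A.val = star A.val * weyl.val
  obtain ⟨z, -, hz⟩ := hA
  rw [hz]
  ext i j
  fin_cases i <;> fin_cases j <;>
    simp [weyl, star_eq_conjTranspose, mul_apply, Fin.sum_univ_two]

end SU2

/-- Two representations with values in the diagonal torus are conjugate iff they are
equal or inverse of each other. -/
theorem stmt11 {Γ : Type*} [Group Γ] (ρ ρ' : Γ →* SU2)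
    (hρ : ∀ γ : Γ, ((ρ γ : SU2) : Matrix (Fin 2) (Fin 2) ℂ) ∈ diagTorus)
    (hρ' : ∀ γ : Γ, ((ρ' γ : SU2) : Matrix (Fin 2) (Fin 2) ℂ) ∈ diagTorus) :
    (∃ g : SU2, ∀ γ : Γ, ρ' γ = g * ρ γ * g⁻¹) ↔
      (ρ' = ρ ∨ ∀ γ : Γ, ρ' γ = (ρ γ)⁻¹) := by
  constructor
  · rintro ⟨g, hg⟩
    have hentry : ∀ γ j, g.val 0 j ≠ 0 →
        (ρ' γ).val 0 0 = ![(ρ γ).val 0 0, starRingEnd ℂ ((ρ γ).val 0 0)] j := by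
      intro γ j hj
      have h := SU2.val_mul_eq_mul_val_of_eq_conj (hg γ)
      rw [eq_diagonal_of_mem_diagTorus (hρ γ), eq_diagonal_of_mem_diagTorus (hρ' γ)] at h
      exact eq_of_diagonal_mul_eq_mul_diagonal h hj
    obtain ⟨j, hj⟩ := exists_row_ne_zero_of_det_ne_zero (SU2.det_val_ne_zero g) 0
    fin_cases j
    · exact .inl <| MonoidHom.ext fun γ =>
        SU2.eq_of_val_zero_zero_eq (hρ γ) (hρ' γ) (hentry γ 0 hj)
    · exact .inr fun γ =>
        SU2.eq_inv_of_val_zero_zero_eq_conj (hρ γ) (hρ' γ) (hentry γ 1 hj)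
  · rintro (rfl | hinv)
    · exact ⟨1, fun γ => by rw [one_mul, inv_one, mul_one]⟩
    · exact ⟨SU2.weyl, fun γ => by rw [hinv, SU2.weyl_mul_inv_of_mem_diagTorus (hρ γ)]⟩

end
end

section
/- For every element w of the free group on two generators there exists a polynomial F_w ∈ ℤ[x, y, z] in three variables such that for all A, B ∈ SU(2), Tr(φ_{A,B}(w)) = F_w(Tr A, Tr B, Tr(AB)), where φ_{A,B} : FreeGroup(Fin 2) → SU(2) is the group homomorphism sending the first generator to A and the second generator to B. -/
open Matrix

noncomputable section

/-! The 2×2 Cayley–Hamilton identity `M² = (tr M) M - 1` on `SL₂` and its polarization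
`BA = (tr A) B + (tr B) A + (tr AB - tr A tr B) - AB` show that the span of `1, A, B, AB` over
the ring generated by `tr A, tr B, tr AB` is stable under left multiplication by `A`, `B` and
their inverses `A⁻¹ = tr A - A`, `B⁻¹ = tr B - B`. It therefore contains `w(A, B)` for every
word `w`, and so `tr w(A, B)` is a polynomial in the three traces. To get one polynomial for all
pairs at once, apply this to the generic pair, whose entries are functions of `(A, B)`. -/

namespace Matrix

variable {R : Type*} [CommRing R]

theorem mul_self_fin_two (A : Matrix (Fin 2) (Fin 2) R) :
    A * A = A.trace • A - A.det • 1 := by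
  ext i j
  fin_cases i <;> fin_cases j <;> simp [mul_apply, trace_fin_two, det_fin_two] <;> ring

theorem mul_self_fin_two_of_det_eq_one {A : Matrix (Fin 2) (Fin 2) R} (hA : A.det = 1) :
    A * A = A.trace • A - 1 := by
  rw [mul_self_fin_two, hA, one_smul]

theorem mul_comm_fin_two (A B : Matrix (Fin 2) (Fin 2) R) :
    B * A = A.trace • B + B.trace • A + ((A * B).trace - A.trace * B.trace) • 1 - A * B := by
  ext i j
  fin_cases i <;> fin_cases j <;> simp [mul_apply, trace_fin_two] <;> ring

theorem adjugate_fin_two_eq_trace_smul_one_sub (A : Matrix (Fin 2) (Fin 2) R) :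
    adjugate A = A.trace • 1 - A := by
  ext i j
  fin_cases i <;> fin_cases j <;> simp [adjugate_fin_two, trace_fin_two]

variable (A B : Matrix (Fin 2) (Fin 2) R)

def traceRing : Subalgebra ℤ R :=
  Algebra.adjoin ℤ (Set.range ![A.trace, B.trace, (A * B).trace])

def traceSpan : Submodule (traceRing A B) (Matrix (Fin 2) (Fin 2) R) :=
  Submodule.span _ {1, A, B, A * B}

variable {A B}

theorem trace_left_mem_traceRing : A.trace ∈ traceRing A B := Algebra.subset_adjoin ⟨0, rfl⟩

theorem trace_right_mem_traceRing : B.trace ∈ traceRing A B := Algebra.subset_adjoin ⟨1, rfl⟩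

theorem trace_left_mul_right_mem_traceRing : (A * B).trace ∈ traceRing A B :=
  Algebra.subset_adjoin ⟨2, rfl⟩

theorem one_mem_traceSpan : 1 ∈ traceSpan A B := Submodule.subset_span (by simp)

theorem left_mem_traceSpan : A ∈ traceSpan A B := Submodule.subset_span (by simp)

theorem right_mem_traceSpan : B ∈ traceSpan A B := Submodule.subset_span (by simp)

theorem left_mul_right_mem_traceSpan : A * B ∈ traceSpan A B := Submodule.subset_span (by simp)

theorem smul_mem_traceSpan {c : R} (hc : c ∈ traceRing A B) {X : Matrix (Fin 2) (Fin 2) R}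
    (hX : X ∈ traceSpan A B) : c • X ∈ traceSpan A B :=
  Submodule.smul_mem _ ⟨c, hc⟩ hX

theorem trace_mem_traceRing_of_mem_traceSpan {X : Matrix (Fin 2) (Fin 2) R}
    (hX : X ∈ traceSpan A B) : X.trace ∈ traceRing A B := by
  induction hX using Submodule.span_induction with
  | mem X hX =>
    rcases hX with rfl | rfl | rfl | rfl
    · simp
    · exact trace_left_mem_traceRing
    · exact trace_right_mem_traceRing
    · exact trace_left_mul_right_mem_traceRing
  | zero => simp
  | add X Y _ _ hX hY => rw [trace_add]; exact add_mem hX hY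
  | smul c X _ hX => rw [Subalgebra.smul_def, trace_smul, smul_eq_mul]; exact mul_mem c.2 hX

theorem mul_mem_traceSpan_of_mul_generators {M : Matrix (Fin 2) (Fin 2) R}
    (h₁ : M * 1 ∈ traceSpan A B) (hA : M * A ∈ traceSpan A B) (hB : M * B ∈ traceSpan A B)
    (hAB : M * (A * B) ∈ traceSpan A B) {X : Matrix (Fin 2) (Fin 2) R}
    (hX : X ∈ traceSpan A B) : M * X ∈ traceSpan A B := by
  induction hX using Submodule.span_induction with
  | mem X hX => rcases hX with rfl | rfl | rfl | rfl <;> assumption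
  | zero => simp
  | add X Y _ _ hX hY => rw [mul_add]; exact add_mem hX hY
  | smul c X _ hX => rw [Subalgebra.smul_def, mul_smul_comm]; exact smul_mem_traceSpan c.2 hX

theorem left_mul_mem_traceSpan (hA : A.det = 1) {X : Matrix (Fin 2) (Fin 2) R}
    (hX : X ∈ traceSpan A B) : A * X ∈ traceSpan A B := by
  have hAA := mul_self_fin_two_of_det_eq_one hA
  have hAAB : A * (A * B) = A.trace • (A * B) - B := by
    rw [← mul_assoc, hAA, sub_mul, smul_mul_assoc, one_mul]
  refine mul_mem_traceSpan_of_mul_generators ?_ ?_ left_mul_right_mem_traceSpan ?_ hX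
  · simpa using left_mem_traceSpan
  · rw [hAA]
    exact sub_mem (smul_mem_traceSpan trace_left_mem_traceRing left_mem_traceSpan)
      one_mem_traceSpan
  · rw [hAAB]
    exact sub_mem (smul_mem_traceSpan trace_left_mem_traceRing left_mul_right_mem_traceSpan)
      right_mem_traceSpan

theorem right_mul_mem_traceSpan (hB : B.det = 1) {X : Matrix (Fin 2) (Fin 2) R}
    (hX : X ∈ traceSpan A B) : B * X ∈ traceSpan A B := by
  have hBB := mul_self_fin_two_of_det_eq_one hB
  have hBAB : B * (A * B) = A + (A * B).trace • B - A.trace • 1 := by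
    rw [← mul_assoc, mul_comm_fin_two A B]
    simp only [add_mul, sub_mul, smul_mul_assoc, one_mul, mul_assoc, hBB, mul_sub, mul_smul_comm,
      mul_one]
    module
  refine mul_mem_traceSpan_of_mul_generators ?_ ?_ ?_ ?_ hX
  · simpa using right_mem_traceSpan
  · rw [mul_comm_fin_two A B]
    refine sub_mem (add_mem (add_mem ?_ ?_) ?_) left_mul_right_mem_traceSpan
    · exact smul_mem_traceSpan trace_left_mem_traceRing right_mem_traceSpan
    · exact smul_mem_traceSpan trace_right_mem_traceRing left_mem_traceSpan
    · refine smul_mem_traceSpan (sub_mem trace_left_mul_right_mem_traceRing ?_) one_mem_traceSpan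
      exact mul_mem trace_left_mem_traceRing trace_right_mem_traceRing
  · rw [hBB]
    exact sub_mem (smul_mem_traceSpan trace_right_mem_traceRing right_mem_traceSpan)
      one_mem_traceSpan
  · rw [hBAB]
    exact sub_mem (add_mem left_mem_traceSpan
      (smul_mem_traceSpan trace_left_mul_right_mem_traceRing right_mem_traceSpan))
      (smul_mem_traceSpan trace_left_mem_traceRing one_mem_traceSpan)

end Matrix

theorem FreeGroup.map_lift_apply {α β γ : Type*} [Group β] [Group γ] (f : β →* γ)
    (g : α → β) (w : FreeGroup α) : f (FreeGroup.lift g w) = FreeGroup.lift (f ∘ g) w :=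
  FreeGroup.lift_unique (f.comp (FreeGroup.lift g)) (by simp)

namespace Matrix.SpecialLinearGroup

variable {n : Type*} [Fintype n] [DecidableEq n] {R : Type*} [CommRing R]

theorem lift_mul_mem_traceSpan (g : Fin 2 → SpecialLinearGroup (Fin 2) R)
    (w : FreeGroup (Fin 2)) {X : Matrix (Fin 2) (Fin 2) R}
    (hX : X ∈ traceSpan (g 0 : Matrix _ _ R) (g 1)) :
    (FreeGroup.lift g w : Matrix (Fin 2) (Fin 2) R) * X ∈
      traceSpan (g 0 : Matrix _ _ R) (g 1) := by
  induction w generalizing X with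
  | C1 => simpa using hX
  | of i =>
    rw [FreeGroup.lift_apply_of]
    fin_cases i
    · exact left_mul_mem_traceSpan (g 0).2 hX
    · exact right_mul_mem_traceSpan (g 1).2 hX
  | inv_of i _ =>
    rw [map_inv, FreeGroup.lift_apply_of, coe_inv, adjugate_fin_two_eq_trace_smul_one_sub,
      sub_mul, smul_mul_assoc, one_mul]
    fin_cases i
    · exact sub_mem (smul_mem_traceSpan trace_left_mem_traceRing hX)
        (left_mul_mem_traceSpan (g 0).2 hX)
    · exact sub_mem (smul_mem_traceSpan trace_right_mem_traceRing hX)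
        (right_mul_mem_traceSpan (g 1).2 hX)
  | mul u v hu hv =>
    rw [map_mul, coe_mul, mul_assoc]
    exact hu (hv hX)

theorem trace_lift_mem_traceRing (g : Fin 2 → SpecialLinearGroup (Fin 2) R)
    (w : FreeGroup (Fin 2)) :
    (FreeGroup.lift g w : Matrix (Fin 2) (Fin 2) R).trace ∈
      traceRing (g 0 : Matrix _ _ R) (g 1) := by
  simpa using trace_mem_traceRing_of_mem_traceSpan (lift_mul_mem_traceSpan g w one_mem_traceSpan)

theorem trace_coe_map {S : Type*} [CommRing S] (f : R →+* S) (M : SpecialLinearGroup n R) :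
    f (M : Matrix n n R).trace = (map f M : Matrix n n S).trace :=
  AddMonoidHom.map_trace f _

variable {ι : Type*}

def ofPi (g : ι → SpecialLinearGroup n R) : SpecialLinearGroup n (ι → R) :=
  ⟨Matrix.of fun i j x => g x i j, funext fun x =>
    ((Pi.evalRingHom (fun _ => R) x).map_det (Matrix.of fun i j x => g x i j)).trans (g x).2⟩

theorem map_evalRingHom_ofPi (g : ι → SpecialLinearGroup n R) (x : ι) :
    map (Pi.evalRingHom (fun _ => R) x) (ofPi g) = g x := by
  ext
  rfl

theorem map_evalRingHom_lift_ofPi {α : Type*} (G : α → ι → SpecialLinearGroup n R) (x : ι)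
    (w : FreeGroup α) :
    map (Pi.evalRingHom (fun _ => R) x) (FreeGroup.lift (fun a => ofPi (G a)) w) =
      FreeGroup.lift (fun a => G a x) w := by
  rw [FreeGroup.map_lift_apply]
  exact congrArg (FreeGroup.lift · w) (funext fun a => map_evalRingHom_ofPi (G a) x)

end Matrix.SpecialLinearGroup

def SU2.toSpecialLinearGroup : SU2 →* SpecialLinearGroup (Fin 2) ℂ where
  toFun A := ⟨A, (mem_specialUnitaryGroup_iff.mp A.2).2⟩
  map_one' := rfl
  map_mul' _ _ := rfl

/-- For any word `w` in the free group on two generators there is an integer polynomial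
`F_w` in three variables with `Tr(w(A,B)) = F_w(Tr A, Tr B, Tr AB)` for all
`A, B ∈ SU(2)`. -/
theorem stmt18 (w : FreeGroup (Fin 2)) :
    ∃ F : MvPolynomial (Fin 3) ℤ, ∀ A B : SU2,
      (((FreeGroup.lift ![A, B] : FreeGroup (Fin 2) →* SU2) w : SU2)
          : Matrix (Fin 2) (Fin 2) ℂ).trace =
        MvPolynomial.aeval
          ![(A : Matrix (Fin 2) (Fin 2) ℂ).trace, (B : Matrix (Fin 2) (Fin 2) ℂ).trace,
            ((A * B : SU2) : Matrix (Fin 2) (Fin 2) ℂ).trace] F := by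
  let g : Fin 2 → SpecialLinearGroup (Fin 2) ((Fin 2 → SU2) → ℂ) :=
    fun a => SpecialLinearGroup.ofPi fun P => SU2.toSpecialLinearGroup (P a)
  have hw := SpecialLinearGroup.trace_lift_mem_traceRing g w
  rw [traceRing, Algebra.adjoin_range_eq_range_aeval] at hw
  obtain ⟨F, hF⟩ := hw
  refine ⟨F, fun A B => ?_⟩
  have hlift :
      SpecialLinearGroup.map (Pi.evalRingHom (fun _ => ℂ) ![A, B]) (FreeGroup.lift g w) =
        SU2.toSpecialLinearGroup (FreeGroup.lift ![A, B] w) := by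
    rw [SpecialLinearGroup.map_evalRingHom_lift_ofPi, FreeGroup.map_lift_apply]
    rfl
  calc _ = Pi.evalRingHom (fun _ => ℂ) ![A, B]
          (FreeGroup.lift g w : Matrix (Fin 2) (Fin 2) _).trace := by
        rw [SpecialLinearGroup.trace_coe_map, hlift]
        rfl
    _ = Pi.evalAlgHom ℤ (fun _ => ℂ) ![A, B] (MvPolynomial.aeval _ F) := by rw [← hF]; rfl
    _ = _ := by
      rw [MvPolynomial.comp_aeval_apply]
      congr 2
      funext k
      -- the traces of the generic matrices evaluate to those of `A`, `B`, `AB` definitionally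
      fin_cases k <;> rfl

end
end

section
/- Let A, B ∈ SU(2) with Tr(A) = Tr(B) = x (a real number). Then x² − 2 ≤ Re(Tr(AB)) ≤ 2; moreover Tr(AB) = 2 if and only if AB = 1, and Tr(AB) = x² − 2 if and only if A = B. -/
open Matrix

noncomputable section

/-! For `B ∈ SU(2)` we have `B⁻¹ = Bᴴ = adj B`, and for 2×2 matrices
`Tr(AB) + Tr(A adj B) = Tr A · Tr B`, so `Tr(AB) = x² − Tr(AB⁻¹)`. Both bounds and both equality
cases therefore reduce to the fact that a unitary `n × n` matrix `M` satisfies `Re Tr M ≤ n`, with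
equality only for `M = 1`, which is `Tr((M − 1)ᴴ(M − 1)) = 2n − 2 Re Tr M ≥ 0`. -/

namespace Matrix

variable {n : Type*} [Fintype n] [DecidableEq n]

theorem trace_mul_add_trace_mul_adjugate_fin_two {R : Type*} [CommRing R]
    (A B : Matrix (Fin 2) (Fin 2) R) :
    (A * B).trace + (A * B.adjugate).trace = A.trace * B.trace := by
  simp only [trace_fin_two, adjugate_fin_two, mul_apply, Fin.sum_univ_two, of_apply, cons_val',
    cons_val_zero, cons_val_one, empty_val', cons_val_fin_one]
  ring

theorem star_eq_adjugate_of_mem_specialUnitaryGroup_s19 {R : Type*} [CommRing R] [StarRing R]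
    {M : Matrix n n R} (hM : M ∈ specialUnitaryGroup n R) : star M = M.adjugate := by
  obtain ⟨hU, hdet⟩ := mem_specialUnitaryGroup_iff.mp hM
  calc star M = star M * (M * M.adjugate) := by rw [mul_adjugate, hdet, one_smul, mul_one]
    _ = M.adjugate := by rw [← Matrix.mul_assoc, mem_unitaryGroup_iff'.mp hU, Matrix.one_mul]

section unitary

open scoped ComplexOrder

variable {𝕜 : Type*} [RCLike 𝕜] {M : Matrix n n 𝕜}

theorem trace_conjTranspose_sub_one_mul_sub_one (hM : M ∈ unitaryGroup n 𝕜) :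
    ((M - 1)ᴴ * (M - 1)).trace = ((2 * Fintype.card n - 2 * RCLike.re M.trace : ℝ) : 𝕜) := by
  have hMM : Mᴴ * M = 1 := mem_unitaryGroup_iff'.mp hM
  rw [conjTranspose_sub, conjTranspose_one, sub_mul, mul_sub, mul_sub, hMM, Matrix.mul_one,
    Matrix.one_mul, Matrix.one_mul, trace_sub, trace_sub, trace_sub, trace_conjTranspose,
    trace_one]
  push_cast
  rw [RCLike.star_def]
  linear_combination -RCLike.add_conj M.trace

theorem re_trace_le_card_of_mem_unitaryGroup (hM : M ∈ unitaryGroup n 𝕜) :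
    RCLike.re M.trace ≤ Fintype.card n := by
  have h := (posSemidef_conjTranspose_mul_self (M - 1)).trace_nonneg
  rw [trace_conjTranspose_sub_one_mul_sub_one hM, RCLike.ofReal_nonneg] at h
  linarith

theorem trace_eq_card_iff_of_mem_unitaryGroup (hM : M ∈ unitaryGroup n 𝕜) :
    M.trace = Fintype.card n ↔ M = 1 := by
  refine ⟨fun h ↦ ?_, fun h ↦ by rw [h, trace_one]⟩
  have h0 := trace_conjTranspose_sub_one_mul_sub_one hM
  rw [h, RCLike.natCast_re, sub_self, RCLike.ofReal_zero,
    trace_conjTranspose_mul_self_eq_zero_iff] at h0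
  exact sub_eq_zero.mp h0

end unitary

end Matrix

namespace SU2

theorem re_trace_le_two (M : SU2) : (M : Matrix (Fin 2) (Fin 2) ℂ).trace.re ≤ 2 := by
  simpa using re_trace_le_card_of_mem_unitaryGroup (𝕜 := ℂ) (mem_specialUnitaryGroup_iff.mp M.2).1

theorem trace_eq_two_iff (M : SU2) : (M : Matrix (Fin 2) (Fin 2) ℂ).trace = 2 ↔ M = 1 := by
  have h := trace_eq_card_iff_of_mem_unitaryGroup (mem_specialUnitaryGroup_iff.mp M.2).1
  rw [Fintype.card_fin, Nat.cast_ofNat] at h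
  rw [h, ← Subtype.coe_inj, Submonoid.coe_one]

theorem trace_mul_add_trace_mul_inv (A B : SU2) :
    ((A * B : SU2) : Matrix (Fin 2) (Fin 2) ℂ).trace +
        ((A * B⁻¹ : SU2) : Matrix (Fin 2) (Fin 2) ℂ).trace =
      (A : Matrix (Fin 2) (Fin 2) ℂ).trace * (B : Matrix (Fin 2) (Fin 2) ℂ).trace := by
  rw [← trace_mul_add_trace_mul_adjugate_fin_two,
    ← star_eq_adjugate_of_mem_specialUnitaryGroup_s19 B.2]
  rfl

end SU2

/-- If `A, B ∈ SU(2)` have common real trace `x`, then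
`x² − 2 ≤ Re(Tr(AB)) ≤ 2`, with `Tr(AB) = 2` iff `AB = 1`, and
`Tr(AB) = x² − 2` iff `A = B`. -/
theorem stmt19 (A B : SU2) (x : ℝ)
    (hA : (A : Matrix (Fin 2) (Fin 2) ℂ).trace = (x : ℂ))
    (hB : (B : Matrix (Fin 2) (Fin 2) ℂ).trace = (x : ℂ)) :
    (x ^ 2 - 2 ≤ (((A * B : SU2) : Matrix (Fin 2) (Fin 2) ℂ).trace).re ∧
      (((A * B : SU2) : Matrix (Fin 2) (Fin 2) ℂ).trace).re ≤ 2) ∧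
    (((A * B : SU2) : Matrix (Fin 2) (Fin 2) ℂ).trace = 2 ↔ A * B = 1) ∧
    (((A * B : SU2) : Matrix (Fin 2) (Fin 2) ℂ).trace = (x : ℂ) ^ 2 - 2 ↔ A = B) := by
  have hsum := SU2.trace_mul_add_trace_mul_inv A B
  rw [hA, hB, ← sq, ← eq_sub_iff_add_eq] at hsum
  refine ⟨⟨?_, SU2.re_trace_le_two _⟩, SU2.trace_eq_two_iff _, ?_⟩
  · have hre := congrArg Complex.re hsum
    rw [Complex.sub_re, ← Complex.ofReal_pow, Complex.ofReal_re] at hre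
    linarith [SU2.re_trace_le_two (A * B⁻¹)]
  · rw [hsum, sub_right_inj, SU2.trace_eq_two_iff, mul_inv_eq_one]

end
end
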